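/- arXiv:1510.02767 — 2 statements merged into one kernel-verified Lean document; each statement's English description precedes it below -/
import Mathlib

section
/- Let M, N ⊂ Z_d^{2n} be Lagrangian subspaces and K = M ∩ N. Then for stabilizer states |M,ζ⟩ and |N,ι⟩ (determined by cosets ζ + M and ι + N), the squared overlap satisfies |⟨M,ζ|N,ι⟩|^2 = d^{-n}|K| if [ζ,m] = [ι,m] for all m ∈ K, and = 0 otherwise. -/
noncomputable section

open scoped Classical

/-- The phase space `V = ℤ_d^n × ℤ_d^n ≃ ℤ_d^{2n}` (momentum and position parts). -/
abbrev PhaseSpace (d n : ℕ) := (Fin n → ZMod d) × (Fin n → ZMod d)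

/-- The standard symplectic form `[u,v] = uᵀ J v` on `ℤ_d^{2n}`. -/
def sform {d n : ℕ} (u v : PhaseSpace d n) : ZMod d :=
  ∑ i, (u.1 i * v.2 i - u.2 i * v.1 i)

/-- A Lagrangian (maximally isotropic) subspace of the phase space. -/
def IsLagrangian {d n : ℕ} (M : Submodule (ZMod d) (PhaseSpace d n)) : Prop :=
  (∀ x ∈ M, ∀ y ∈ M, sform x y = 0) ∧ Module.finrank (ZMod d) M = n

/-- `ω = e^{2πi/d}`. -/
def omegaC (d : ℕ) : ℂ := Complex.exp (2 * Real.pi * Complex.I / d)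

/-- `τ = (-1)^d e^{πi/d}`. -/
def tauC (d : ℕ) : ℂ := (-1) ^ d * Complex.exp (Real.pi * Complex.I / d)

/-- The `n`-qudit Weyl operator `w(p,q) = w(p₁,q₁) ⊗ ⋯ ⊗ w(pₙ,qₙ)` on `(ℂ^d)^{⊗n}`,
written out in matrix entries: `w(p,q)_{x,y} = τ^{-Σᵢ pᵢqᵢ} ω^{p·x} δ_{x,y+q}`
(the exponent of `τ` being computed in the integers from representatives). -/
def weylN (d n : ℕ) (v : PhaseSpace d n) :
    Matrix (Fin n → ZMod d) (Fin n → ZMod d) ℂ := fun x y =>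
  (tauC d ^ (-((∑ i, (v.1 i).val * (v.2 i).val : ℕ) : ℤ)))
    * omegaC d ^ ((∑ i, v.1 i * x i : ZMod d)).val
    * (if x = y + v.2 then 1 else 0)

/-- The basis-dependent Weyl operators: given a basis `B = {u_i}` of a subspace
`M` and `m = Σ mᵢ uᵢ ∈ M`, set `w_B(m) = Πᵢ w(uᵢ)^{mᵢ}`. This turns `m ↦ w_B(m)`
into a true (non-projective) representation of `M` when `M` is isotropic. -/
def weylB {d n : ℕ} [NeZero d] {M : Submodule (ZMod d) (PhaseSpace d n)}
    {ι : Type*} [Fintype ι] (b : Module.Basis ι (ZMod d) M) (m : M) :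
    Matrix (Fin n → ZMod d) (Fin n → ZMod d) ℂ :=
  ((Finset.univ : Finset ι).toList.map
    (fun i => weylN d n ((b i : PhaseSpace d n)) ^ ((b.repr m) i).val)).prod

/-- The stabilizer-state operator `ρ_{M,v} = d^{-n} Σ_{m∈M} ω^{[v,m]} w_B(m)`. -/
def stabRho {d n : ℕ} [NeZero d] {M : Submodule (ZMod d) (PhaseSpace d n)}
    {ι : Type*} [Fintype ι] (b : Module.Basis ι (ZMod d) M) (v : PhaseSpace d n) :
    Matrix (Fin n → ZMod d) (Fin n → ZMod d) ℂ :=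
  ((d : ℂ) ^ n)⁻¹ • ∑ᶠ m : M, omegaC d ^ (sform v (m : PhaseSpace d n)).val • weylB b m

/-!
Expanding both projectors,
`tr(ρ_{M,ζ} ρ_{N,ι}) = d^{-2n} Σ_{m ∈ M, m' ∈ N} ω^{[ζ,m] + [ι,m']} tr(w_B(m) w_B(m'))`.
Every Weyl operator `w(p,q)` is a scalar multiple of the clock-shift operator `D(p) X(q)`; these
multiply up to a phase and are traceless unless `(p,q) = 0`, so only the pairs with `m + m' = 0`,
i.e. `m = -m' ∈ K = M ∩ N`, survive. For those, compatibility of the bases and the fact that `w_B`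
is a genuine representation of the isotropic `N` give `w_B(m) w_B(m') = 1`, of trace `d^n`. What
is left is the character sum `d^{-n} Σ_{k ∈ K} ω^{[ζ,k] - [ι,k]}`, which is `|K|` or `0`
according to whether the character `k ↦ ω^{[ζ - ι, k]}` of `K` is trivial.
-/

open ZMod (stdAddChar)
open Matrix

lemma List.prod_map_pow_add {M ι : Type*} [Monoid M] {f : ι → M}
    (hf : ∀ i j, Commute (f i) (f j)) (e e' : ι → ℕ) (l : List ι) :
    (l.map fun i => f i ^ (e i + e' i)).prod
      = (l.map fun i => f i ^ e i).prod * (l.map fun i => f i ^ e' i).prod := by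
  induction l with
  | nil => simp
  | cons a t ih =>
    have hcomm : Commute (f a ^ e' a) (t.map fun i => f i ^ e i).prod :=
      Commute.list_prod_right _ _ fun x hx => by
        obtain ⟨i, -, rfl⟩ := List.mem_map.1 hx
        exact (hf a i).pow_pow _ _
    simp only [List.map_cons, List.prod_cons]
    rw [ih, pow_add, mul_assoc, ← mul_assoc (f a ^ e' a), hcomm.eq]
    simp only [mul_assoc]

lemma Submodule.sum_sum_ite_add_eq_zero {R V A : Type*} [Ring R] [AddCommGroup V] [Module R V]
    [AddCommMonoid A] (M N : Submodule R V) [Fintype M] [Fintype N] [Fintype ↥(M ⊓ N)]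
    [DecidableEq V] (f : V → V → A) :
    ∑ m : M, ∑ m' : N, (if (m : V) + m' = 0 then f m m' else 0)
      = ∑ k : ↥(M ⊓ N), f k (-k) := by
  have inner (m : M) : ∑ m' : N, (if (m : V) + m' = 0 then f m m' else 0)
      = if (m : V) ∈ N then f m (-m) else 0 := by
    split_ifs with hm
    · rw [Fintype.sum_eq_single ⟨-m, neg_mem hm⟩ fun m' hm' => if_neg fun h => hm' ?_]
      · simp
      · exact Subtype.ext (eq_neg_of_add_eq_zero_right h)
    · exact Fintype.sum_eq_zero _ fun m' =>
        if_neg fun h => hm ((eq_neg_of_add_eq_zero_left h : (m : V) = _) ▸ neg_mem m'.2)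
  simp_rw [inner]
  exact (Fintype.sum_of_injective (Submodule.inclusion inf_le_left)
    (Submodule.inclusion_injective _) _ _
    (fun m hm => if_neg fun h => hm ⟨⟨m, m.2, h⟩, rfl⟩) fun k => (if_pos k.2.2).symm).symm

section SymplecticForm
variable {d n : ℕ}

lemma sform_eq_dotProduct (u v : PhaseSpace d n) : sform u v = u.1 ⬝ᵥ v.2 - u.2 ⬝ᵥ v.1 :=
  Finset.sum_sub_distrib ..

lemma sform_add_right (v x y : PhaseSpace d n) : sform v (x + y) = sform v x + sform v y := by
  simp only [sform_eq_dotProduct, Prod.fst_add, Prod.snd_add, dotProduct_add]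
  abel

lemma sform_neg_right (v x : PhaseSpace d n) : sform v (-x) = -sform v x := by
  simp only [sform_eq_dotProduct, Prod.fst_neg, Prod.snd_neg, dotProduct_neg]
  abel

end SymplecticForm

section Characters
variable {d n : ℕ}

lemma tauC_sq : tauC d ^ 2 = omegaC d := by
  rw [tauC, omegaC, mul_pow, ← pow_mul, ← Complex.exp_nat_mul, mul_comm d 2, pow_mul]
  norm_num
  ring_nf

variable [NeZero d]

lemma stdAddChar_natCast_eq_omegaC_pow (k : ℕ) :
    stdAddChar (k : ZMod d) = omegaC d ^ k := by
  rw [ZMod.stdAddChar_apply, ZMod.toCircle_natCast, omegaC, ← Complex.exp_nat_mul]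
  ring_nf

lemma omegaC_pow_val (z : ZMod d) : omegaC d ^ z.val = stdAddChar z := by
  rw [← stdAddChar_natCast_eq_omegaC_pow, ZMod.natCast_zmod_val]

lemma tauC_pow_mul_self : tauC d ^ (d * d) = 1 := by
  have hd : (d : ℂ) ≠ 0 := Nat.cast_ne_zero.2 (NeZero.ne d)
  have hτ : tauC d ^ d = (-1) ^ (d + 1) := by
    rw [tauC, mul_pow, ← pow_mul, ← Complex.exp_nat_mul,
      show (d : ℂ) * (Real.pi * Complex.I / d) = Real.pi * Complex.I by field_simp,
      Complex.exp_pi_mul_I, pow_succ, pow_mul]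
    rcases Nat.even_or_odd d with h | h <;> simp [h.neg_one_pow]
  rw [pow_mul, hτ, ← pow_mul, mul_comm, (Nat.even_mul_succ_self d).neg_one_pow]

lemma sum_stdAddChar_apply_eq_ite {G : Type*} [AddCommGroup G] [Fintype G] (f : G →+ ZMod d) :
    ∑ g, stdAddChar (f g) = if f = 0 then (Fintype.card G : ℂ) else 0 := by
  have hf : (stdAddChar : AddChar (ZMod d) ℂ).compAddMonoidHom f = 0 ↔ f = 0 := by
    rw [AddChar.eq_zero_iff, DFunLike.ext_iff]
    refine forall_congr' fun g => ?_
    rw [AddChar.compAddMonoidHom_apply, AddMonoidHom.zero_apply,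
      ← AddChar.map_zero_eq_one (stdAddChar (N := d)), ZMod.injective_stdAddChar.eq_iff]
  rw [← if_congr hf rfl rfl]
  exact AddChar.sum_eq_ite ((stdAddChar (N := d)).compAddMonoidHom f)

lemma sum_stdAddChar_sform_sub_eq_ite (K : Submodule (ZMod d) (PhaseSpace d n))
    (ζ ι : PhaseSpace d n) :
    ∑ k : K, stdAddChar (sform ζ k - sform ι k)
      = if ∀ m ∈ K, sform ζ m = sform ι m then (Nat.card K : ℂ) else 0 := by
  let f : K →+ ZMod d := AddMonoidHom.mk' (fun k => sform ζ k - sform ι k) fun x y => by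
    simp only [Submodule.coe_add, sform_add_right]
    abel
  have hf : f = 0 ↔ ∀ m ∈ K, sform ζ m = sform ι m := by
    simp [DFunLike.ext_iff, f, sub_eq_zero]
  rw [← if_congr hf rfl rfl, Nat.card_eq_fintype_card]
  exact sum_stdAddChar_apply_eq_ite f

end Characters

section ClockShift
variable {d n : ℕ} [NeZero d]

def clockShift (d n : ℕ) [NeZero d] (v : PhaseSpace d n) :
    Matrix (Fin n → ZMod d) (Fin n → ZMod d) ℂ :=
  of fun x y => stdAddChar (v.1 ⬝ᵥ x) * if x = y + v.2 then 1 else 0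

lemma weylN_eq_smul_clockShift (v : PhaseSpace d n) :
    weylN d n v
      = tauC d ^ (-((∑ i, (v.1 i).val * (v.2 i).val : ℕ) : ℤ)) • clockShift d n v := by
  ext x y
  rw [weylN, Matrix.smul_apply, clockShift, of_apply, omegaC_pow_val, smul_eq_mul, mul_assoc]
  rfl

lemma clockShift_zero : clockShift d n 0 = 1 := by
  ext x y
  simp [clockShift, one_apply]

lemma clockShift_mul (u v : PhaseSpace d n) :
    clockShift d n u * clockShift d n v
      = stdAddChar (-(v.1 ⬝ᵥ u.2)) • clockShift d n (u + v) := by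
  ext x y
  rw [mul_apply, Finset.sum_eq_single (x - u.2)]
  · simp only [clockShift, of_apply, Matrix.smul_apply, smul_eq_mul, sub_add_cancel, if_true,
      mul_one, Prod.fst_add, Prod.snd_add, add_dotProduct, dotProduct_sub, ← add_assoc,
      sub_eq_iff_eq_add, add_right_comm y v.2 u.2]
    split_ifs
    · rw [sub_eq_add_neg, AddChar.map_add_eq_mul, AddChar.map_add_eq_mul]
      ring
    · ring
  · intro z _ hz
    simp only [clockShift, of_apply]
    rw [if_neg (fun h => hz (by rw [h, add_sub_cancel_right])), mul_zero, zero_mul]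
  · simp

lemma clockShift_pow (u : PhaseSpace d n) (k : ℕ) :
    clockShift d n u ^ k
      = stdAddChar (-((k.choose 2 : ZMod d) * (u.1 ⬝ᵥ u.2))) • clockShift d n (k • u) := by
  induction k with
  | zero => simp [clockShift_zero]
  | succ k ih =>
    rw [pow_succ, ih, smul_mul_assoc, clockShift_mul, smul_smul, ← AddChar.map_add_eq_mul,
      succ_nsmul, Nat.choose_succ_succ', Nat.choose_one_right, Prod.smul_snd, dotProduct_smul,
      nsmul_eq_mul]
    push_cast
    ring_nf

lemma trace_clockShift {v : PhaseSpace d n} (hv : v ≠ 0) : (clockShift d n v).trace = 0 := by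
  by_cases hq : v.2 = 0
  · have hp : v.1 ≠ 0 := fun hp => hv (Prod.ext hp hq)
    have hf : AddMonoidHom.mk' (v.1 ⬝ᵥ ·) (dotProduct_add v.1) ≠ 0 := fun hf =>
      hp (funext fun i => by simpa using DFunLike.congr_fun hf (Pi.single i 1))
    simpa [trace, clockShift, hq, hf] using sum_stdAddChar_apply_eq_ite
      (AddMonoidHom.mk' (v.1 ⬝ᵥ ·) (dotProduct_add v.1))
  · refine Finset.sum_eq_zero fun x _ => ?_
    rw [diag_apply, clockShift, of_apply, if_neg (by simpa using hq), mul_zero]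

end ClockShift

section Weyl
variable {d n : ℕ} [NeZero d]

lemma weylN_commute {u v : PhaseSpace d n} (h : sform u v = 0) :
    Commute (weylN d n u) (weylN d n v) := by
  have hdot : v.1 ⬝ᵥ u.2 = u.1 ⬝ᵥ v.2 := by
    rw [sform_eq_dotProduct, sub_eq_zero] at h
    rw [h, dotProduct_comm]
  rw [Commute, SemiconjBy, weylN_eq_smul_clockShift, weylN_eq_smul_clockShift,
    smul_mul_smul_comm, smul_mul_smul_comm, clockShift_mul, clockShift_mul, hdot, add_comm v u,
    mul_comm (tauC d ^ _)]

-- With `s ≡ p ⬝ᵥ q (mod d)` the exponent of `τ` in `w(p,q)`, the phase of `w(p,q)^d` is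
-- `τ^{-sd} ω^{-C(d,2) s} = τ^{-d² s}`, and `τ^{d²} = 1`.
lemma weylN_pow_self (u : PhaseSpace d n) : weylN d n u ^ d = 1 := by
  rw [weylN_eq_smul_clockShift, smul_pow, clockShift_pow, ← Nat.cast_smul_eq_nsmul (ZMod d),
    ZMod.natCast_self, zero_smul, clockShift_zero, smul_smul]
  set s := ∑ i, (u.1 i).val * (u.2 i).val
  have hs : (s : ZMod d) = u.1 ⬝ᵥ u.2 := by
    simp only [s, Nat.cast_sum, Nat.cast_mul, ZMod.natCast_val, ZMod.cast_id', id]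
    rfl
  have hexp : s * d + 2 * (d.choose 2 * s) = d * d * s := by
    have h2 : 2 * d.choose 2 = d * (d - 1) := by
      rw [Nat.choose_two_right]
      exact Nat.mul_div_cancel' (Nat.even_mul_pred_self d).two_dvd
    have hd : d * (d - 1) + d = d * d := by
      rw [← Nat.mul_succ, Nat.succ_eq_add_one, Nat.sub_add_cancel NeZero.one_le]
    rw [← mul_assoc, h2, ← hd]
    ring
  rw [← hs, ← Nat.cast_mul, AddChar.map_neg_eq_inv, stdAddChar_natCast_eq_omegaC_pow, ← tauC_sq,
    _root_.zpow_neg, zpow_natCast, inv_pow, ← pow_mul, ← pow_mul, ← mul_inv, ← pow_add, hexp,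
    pow_mul, tauC_pow_mul_self, one_pow, inv_one, one_smul]

end Weyl

section WeylB
variable {d n : ℕ} [NeZero d]

lemma exists_prod_map_weylN_pow_eq_smul_clockShift {κ : Type*} (g : κ → PhaseSpace d n)
    (e : κ → ℕ) (l : List κ) :
    ∃ c : ℂ, (l.map fun i => weylN d n (g i) ^ e i).prod
      = c • clockShift d n (l.map fun i => e i • g i).sum := by
  induction l with
  | nil => exact ⟨1, by simp [clockShift_zero]⟩
  | cons a t ih =>
    obtain ⟨c, hc⟩ := ih
    rw [List.map_cons, List.prod_cons, hc, weylN_eq_smul_clockShift, smul_pow, clockShift_pow,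
      smul_smul, smul_mul_smul_comm, clockShift_mul, smul_smul, List.map_cons, List.sum_cons]
    exact ⟨_, rfl⟩

variable {M N : Submodule (ZMod d) (PhaseSpace d n)} {κ κ' : Type*} [Fintype κ] [Fintype κ']

lemma exists_weylB_eq_smul_clockShift (b : Module.Basis κ (ZMod d) M) (m : M) :
    ∃ c : ℂ, weylB b m = c • clockShift d n m := by
  obtain ⟨c, hc⟩ := exists_prod_map_weylN_pow_eq_smul_clockShift
    (fun i => (b i : PhaseSpace d n)) (fun i => (b.repr m i).val) Finset.univ.toList
  refine ⟨c, ?_⟩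
  rw [weylB, hc, Finset.sum_map_toList]
  congr 2
  simp only [← Nat.cast_smul_eq_nsmul (ZMod d), ZMod.natCast_val, ZMod.cast_id', id]
  conv_rhs => rw [← b.sum_repr m]
  push_cast
  rfl

lemma weylB_zero (b : Module.Basis κ (ZMod d) M) : weylB b 0 = 1 := by
  simp [weylB]

lemma weylB_add (hM : ∀ x ∈ M, ∀ y ∈ M, sform x y = 0) (b : Module.Basis κ (ZMod d) M)
    (m m' : M) : weylB b (m + m') = weylB b m * weylB b m' := by
  rw [weylB, weylB, weylB,
    ← List.prod_map_pow_add fun i j => weylN_commute (hM _ (b i).2 _ (b j).2)]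
  refine congrArg List.prod (List.map_congr_left fun i _ => ?_)
  rw [map_add, Finsupp.add_apply, ZMod.val_add, ← pow_eq_pow_mod _ (weylN_pow_self _)]

lemma trace_weylB_mul_weylB (hN : ∀ x ∈ N, ∀ y ∈ N, sform x y = 0)
    (bM : Module.Basis κ (ZMod d) M) (bN : Module.Basis κ' (ZMod d) N)
    (hcomp : ∀ (x : M) (y : N), (x : PhaseSpace d n) = (y : PhaseSpace d n) →
      weylB bM x = weylB bN y)
    (m : M) (m' : N) :
    (weylB bM m * weylB bN m').trace
      = if (m : PhaseSpace d n) + m' = 0 then (d : ℂ) ^ n else 0 := by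
  split_ifs with h
  · rw [hcomp m (-m') (eq_neg_of_add_eq_zero_left h), ← weylB_add hN, neg_add_cancel, weylB_zero,
      trace_one]
    simp [Fintype.card_pi]
  · obtain ⟨c, hc⟩ := exists_weylB_eq_smul_clockShift bM m
    obtain ⟨c', hc'⟩ := exists_weylB_eq_smul_clockShift bN m'
    rw [hc, hc', smul_mul_smul_comm, clockShift_mul, smul_smul, trace_smul, trace_clockShift h,
      smul_zero]

end WeylB

section StabilizerStates
variable {d n : ℕ} [NeZero d] {M N : Submodule (ZMod d) (PhaseSpace d n)}
  {κ κ' : Type*} [Fintype κ] [Fintype κ']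

lemma stabRho_eq_sum (b : Module.Basis κ (ZMod d) M) (v : PhaseSpace d n) :
    stabRho b v = ((d : ℂ) ^ n)⁻¹ • ∑ m : M, stdAddChar (sform v m) • weylB b m := by
  simp only [stabRho, finsum_eq_sum_of_fintype, omegaC_pow_val]

lemma trace_stabRho_mul_stabRho (hN : ∀ x ∈ N, ∀ y ∈ N, sform x y = 0)
    (bM : Module.Basis κ (ZMod d) M) (bN : Module.Basis κ' (ZMod d) N)
    (hcomp : ∀ (x : M) (y : N), (x : PhaseSpace d n) = (y : PhaseSpace d n) →
      weylB bM x = weylB bN y)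
    (ζ ι : PhaseSpace d n) :
    (stabRho bM ζ * stabRho bN ι).trace
      = ((d : ℂ) ^ n)⁻¹ * ∑ k : ↥(M ⊓ N), stdAddChar (sform ζ k - sform ι k) := by
  rw [stabRho_eq_sum, stabRho_eq_sum, smul_mul_smul_comm, Finset.sum_mul_sum, trace_smul,
    trace_sum]
  simp_rw [trace_sum, smul_mul_smul_comm, trace_smul, trace_weylB_mul_weylB hN bM bN hcomp,
    smul_eq_mul, mul_ite, mul_zero]
  rw [Submodule.sum_sum_ite_add_eq_zero M N fun x y =>
      stdAddChar (sform ζ x) * stdAddChar (sform ι y) * (d : ℂ) ^ n,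
    ← Finset.sum_mul]
  simp_rw [sform_neg_right, ← AddChar.map_add_eq_mul, ← sub_eq_add_neg]
  have hd : (d : ℂ) ^ n ≠ 0 := pow_ne_zero _ (Nat.cast_ne_zero.2 (NeZero.ne d))
  field_simp

end StabilizerStates

theorem stab_overlap_general (d n : ℕ) [NeZero d]
    (M N : Submodule (ZMod d) (PhaseSpace d n))
    (hN : IsLagrangian N)
    {ι₁ ι₂ : Type*} [Fintype ι₁] [Fintype ι₂]
    (bM : Module.Basis ι₁ (ZMod d) M) (bN : Module.Basis ι₂ (ZMod d) N)
    (hcomp : ∀ (x : M) (y : N), (x : PhaseSpace d n) = (y : PhaseSpace d n) →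
      weylB bM x = weylB bN y)
    (ζ ι : PhaseSpace d n) :
    (stabRho bM ζ * stabRho bN ι).trace
      = if ∀ m ∈ M ⊓ N, sform ζ m = sform ι m
        then ((d : ℂ) ^ n)⁻¹ * (Nat.card (M ⊓ N : Submodule (ZMod d) (PhaseSpace d n)) : ℂ)
        else 0 := by
  rw [trace_stabRho_mul_stabRho hN.1 bM bN hcomp, sum_stdAddChar_sform_sub_eq_ite, mul_ite,
    mul_zero]

/-- **Overlap of stabilizer states.** Let `M, N ⊆ ℤ_d^{2n}` be Lagrangian subspaces
with compatible bases (the basis-dependent Weyl operators of `M` and `N` agree on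
`K = M ∩ N`), and let `ζ, ι` be coset representatives. Then
`|⟨M,ζ|N,ι⟩|² = tr(ρ_{M,ζ} ρ_{N,ι})` equals `d^{-n}|K|` if `[ζ,m] = [ι,m]` for all
`m ∈ K`, and `0` otherwise. -/
theorem stab_overlap (d n : ℕ) (hd : d.Prime) [NeZero d]
    (M N : Submodule (ZMod d) (PhaseSpace d n))
    (hM : IsLagrangian M) (hN : IsLagrangian N)
    {ι₁ ι₂ : Type*} [Fintype ι₁] [Fintype ι₂]
    (bM : Module.Basis ι₁ (ZMod d) M) (bN : Module.Basis ι₂ (ZMod d) N)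
    (hcomp : ∀ (x : M) (y : N), (x : PhaseSpace d n) = (y : PhaseSpace d n) →
      weylB bM x = weylB bN y)
    (ζ ι : PhaseSpace d n) :
    (stabRho bM ζ * stabRho bN ι).trace
      = if ∀ m ∈ M ⊓ N, sform ζ m = sform ι m
        then ((d : ℂ) ^ n)⁻¹ * (Nat.card (M ⊓ N : Submodule (ZMod d) (PhaseSpace d n)) : ℂ)
        else 0 :=
  stab_overlap_general d n M N hN bM bN hcomp ζ ι
end
end

section
/- For prime d and all n ≥ 1, F_2(d,n) = W_2(d^n), where F_t(d,n) = S(d,n)^{-1} Σ_{k=0}^n binom(n,k)_d d^{(n-k)(n-k+3-2t)/2}, S(d,n) = d^n Π_{j=1}^n (d^j+1), and W_t(D) = binom(D+t-1, t)^{-1}. That is, the frame potential of stabilizer states meets the order-2 Welch bound, so stabilizer states form a complex projective 2-design. -/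
/-- The Gaussian binomial coefficient `binom(n,k)_d`. -/
noncomputable def gbinom (d n k : ℕ) : ℚ :=
  if k ≤ n then ∏ i ∈ Finset.range k, ((d : ℚ) ^ (n - i) - 1) / ((d : ℚ) ^ (k - i) - 1)
  else 0

/-- `S(d,n) = d^n · Π_{j=1}^n (d^j + 1)`, the number of stabilizer states in
dimension `d^n`. -/
def Scard (d n : ℕ) : ℕ := d ^ n * ∏ j ∈ Finset.Icc 1 n, (d ^ j + 1)

/-- The `t`-th frame potential of the stabilizer states in dimension `d^n`:
`F_t(d,n) = S(d,n)⁻¹ Σ_{k=0}^n binom(n,k)_d d^{(n-k)(n-k+3-2t)/2}`. -/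
noncomputable def framePot (d t n : ℕ) : ℚ :=
  (Scard d n : ℚ)⁻¹ * ∑ k ∈ Finset.range (n + 1),
    gbinom d n k * (d : ℚ) ^ ((((n : ℤ) - k) * ((n : ℤ) - k + 3 - 2 * t)) / 2)

/-- The Welch bound `W_t(D) = binom(D+t-1, t)⁻¹`, the minimal `t`-th frame potential
in dimension `D`; it is met exactly by complex projective `t`-designs. -/
noncomputable def welch (t D : ℕ) : ℚ := ((D + t - 1).choose t : ℚ)⁻¹

/-!
For `t = 2` the exponent `(n-k)(n-k-1)/2` is `binom(n-k, 2)`, so with `q = d` the sum in `F_2(d,n)` is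
the Cauchy `q`-binomial theorem `Σ_k binom(n,k)_q q^{binom(n-k,2)} x^{n-k} = Π_{j<n} (1 + q^j x)`
at `x = 1`. The product `Π_{j<n} (1 + q^j)` cancels against `S(d,n) = q^n Π_{j=1}^n (q^j + 1)` up to
the factor `2 / (q^n (q^n + 1)) = 1 / binom(q^n + 1, 2)`.
-/

open Finset

noncomputable def qDescProd (d n k : ℕ) : ℚ := ∏ i ∈ range k, ((d : ℚ) ^ (n - i) - 1)

noncomputable def qFactProd (d k : ℕ) : ℚ := ∏ i ∈ range k, ((d : ℚ) ^ (i + 1) - 1)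

lemma qFactProd_succ (d k : ℕ) :
    qFactProd d (k + 1) = qFactProd d k * ((d : ℚ) ^ (k + 1) - 1) :=
  prod_range_succ _ _

lemma qDescProd_succ (d n k : ℕ) :
    qDescProd d n (k + 1) = qDescProd d n k * ((d : ℚ) ^ (n - k) - 1) :=
  prod_range_succ _ _

lemma qDescProd_succ_succ (d n k : ℕ) :
    qDescProd d (n + 1) (k + 1) = ((d : ℚ) ^ (n + 1) - 1) * qDescProd d n k := by
  simp only [qDescProd, prod_range_succ', Nat.sub_zero, Nat.succ_sub_succ, mul_comm]

lemma qFactProd_ne_zero {d : ℕ} (hd : 2 ≤ d) (k : ℕ) : qFactProd d k ≠ 0 := by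
  refine prod_ne_zero_iff.2 fun i _ => (sub_pos.2 (one_lt_pow₀ ?_ i.succ_ne_zero)).ne'
  exact_mod_cast hd

/-- For `k > n` both sides vanish: the factor `i = n` of `qDescProd d n k` is `d ^ 0 - 1`. -/
lemma gbinom_eq_div (d n k : ℕ) : gbinom d n k = qDescProd d n k / qFactProd d k := by
  unfold gbinom
  split_ifs with hk
  · rw [prod_div_distrib, qDescProd, qFactProd,
      ← prod_range_reflect (fun i => (d : ℚ) ^ (i + 1) - 1)]
    congr 1
    refine prod_congr rfl fun i hi => ?_
    rw [show k - 1 - i + 1 = k - i by have := mem_range.1 hi; omega]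
  · rw [qDescProd, prod_eq_zero (mem_range.2 (not_le.1 hk)) (by simp), zero_div]

lemma gbinom_zero_right (d n : ℕ) : gbinom d n 0 = 1 := by
  simp [gbinom]

lemma gbinom_of_lt {d n k : ℕ} (h : n < k) : gbinom d n k = 0 := by
  rw [gbinom, if_neg h.not_ge]

lemma gbinom_succ_succ {d : ℕ} (hd : 2 ≤ d) (n k : ℕ) :
    gbinom d (n + 1) (k + 1) = gbinom d n (k + 1) + (d : ℚ) ^ (n - k) * gbinom d n k := by
  rcases lt_or_ge n k with hnk | hkn
  · rw [gbinom_of_lt (by omega), gbinom_of_lt (by omega), gbinom_of_lt hnk]; simp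
  have hF := qFactProd_ne_zero hd k
  have hK : (d : ℚ) ^ (k + 1) - 1 ≠ 0 := by
    simpa [qFactProd_succ, hF] using qFactProd_ne_zero hd (k + 1)
  have hpow : (d : ℚ) ^ (n + 1) = (d : ℚ) ^ (n - k) * (d : ℚ) ^ (k + 1) := by
    rw [← pow_add]; congr 1; omega
  simp only [gbinom_eq_div, qDescProd_succ_succ, qDescProd_succ, qFactProd_succ, hpow]
  field_simp
  ring

/-- The Cauchy `q`-binomial theorem, for `q = d`. -/
theorem sum_gbinom_mul_pow_choose_two {d : ℕ} (hd : 2 ≤ d) (n : ℕ) (x : ℚ) :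
    ∑ k ∈ range (n + 1), gbinom d n k * (d : ℚ) ^ (n - k).choose 2 * x ^ (n - k) =
      ∏ j ∈ range n, (1 + (d : ℚ) ^ j * x) := by
  induction n generalizing x with
  | zero => simp [gbinom_zero_right]
  | succ n ih =>
    set q : ℚ := (d : ℚ)
    have hshift : ∑ k ∈ range (n + 2), gbinom d n k * q ^ (n + 1 - k).choose 2 * x ^ (n + 1 - k) =
        x * ∏ j ∈ range n, (1 + q ^ j * (q * x)) := by
      rw [sum_range_succ, gbinom_of_lt n.lt_succ_self, zero_mul, zero_mul, add_zero, ← ih,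
        mul_sum]
      refine sum_congr rfl fun k hk => ?_
      rw [show n + 1 - k = n - k + 1 by have := mem_range.1 hk; omega, Nat.choose_succ_succ',
        Nat.choose_one_right]
      ring
    have hscaled : ∑ k ∈ range (n + 1),
        q ^ (n - k) * gbinom d n k * q ^ (n - k).choose 2 * x ^ (n - k) =
        ∏ j ∈ range n, (1 + q ^ j * (q * x)) := by
      rw [← ih]
      exact sum_congr rfl fun k _ => by ring
    calc ∑ k ∈ range (n + 1 + 1), gbinom d (n + 1) k * q ^ (n + 1 - k).choose 2 * x ^ (n + 1 - k)
        = ∑ k ∈ range (n + 2), gbinom d n k * q ^ (n + 1 - k).choose 2 * x ^ (n + 1 - k) +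
            ∑ k ∈ range (n + 1),
              q ^ (n - k) * gbinom d n k * q ^ (n - k).choose 2 * x ^ (n - k) := by
          rw [sum_range_succ' _ (n + 1), sum_range_succ' _ (n + 1)]
          simp only [gbinom_succ_succ hd, gbinom_zero_right, Nat.add_sub_add_right]
          rw [add_right_comm, ← sum_add_distrib]
          congr 1
          exact sum_congr rfl fun k _ => by ring
      _ = (1 + x) * ∏ j ∈ range n, (1 + q ^ j * (q * x)) := by rw [hshift, hscaled]; ring
      _ = ∏ j ∈ range (n + 1), (1 + q ^ j * x) := by
          rw [prod_range_succ', mul_comm]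
          simp only [pow_succ, pow_zero, one_mul, mul_assoc]

lemma prod_range_succ_one_add_pow {R : Type*} [CommSemiring R] (q : R) (n : ℕ) :
    ∏ j ∈ range (n + 1), (1 + q ^ j) = 2 * ∏ j ∈ Icc 1 n, (q ^ j + 1) := by
  induction n with
  | zero => simp [one_add_one_eq_two]
  | succ n ih =>
    rw [prod_range_succ, ih, prod_Icc_succ_top (by omega), add_comm (q ^ (n + 1)), mul_assoc]

lemma natCast_mul_sub_one_ediv_two (m : ℕ) : (m : ℤ) * (m - 1) / 2 = m.choose 2 := by
  have h2 : (m : ℤ) * (m - 1) = 2 * m.choose 2 := by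
    rw [← Int.cast_inj (α := ℚ)]
    push_cast
    rw [Nat.cast_choose_two]
    ring
  rw [h2, Int.mul_ediv_cancel_left _ two_ne_zero]

theorem stab_two_design_general (d n : ℕ) (hd : d.Prime) :
    framePot d 2 n = welch 2 (d ^ n) := by
  have hsum : ∑ k ∈ range (n + 1), gbinom d n k *
      (d : ℚ) ^ ((((n : ℤ) - k) * ((n : ℤ) - k + 3 - 2 * (2 : ℕ))) / 2) =
      ∏ j ∈ range n, (1 + (d : ℚ) ^ j) := by
    have h := sum_gbinom_mul_pow_choose_two hd.two_le n 1
    simp only [one_pow, mul_one] at h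
    rw [← h]
    refine sum_congr rfl fun k hk => ?_
    have hk : ((n - k : ℕ) : ℤ) = n - k := by have := mem_range.1 hk; omega
    rw [← zpow_natCast, ← natCast_mul_sub_one_ediv_two, hk]
    congr 3
    push_cast
    ring
  have hS : (Scard d n : ℚ) * 2 = d ^ n * (∏ j ∈ range n, (1 + (d : ℚ) ^ j)) * (1 + d ^ n) := by
    rw [mul_assoc, ← prod_range_succ, prod_range_succ_one_add_pow, Scard]
    push_cast
    ring
  have hW : welch 2 (d ^ n) = 2 / ((d : ℚ) ^ n * ((d : ℚ) ^ n + 1)) := by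
    rw [welch, show d ^ n + 2 - 1 = d ^ n + 1 by omega, Nat.cast_choose_two]
    push_cast
    field_simp
    ring
  have hq : (0 : ℚ) < d := by exact_mod_cast hd.pos
  have hS0 : (Scard d n : ℚ) ≠ 0 :=
    Nat.cast_ne_zero.2 (by simp [Scard, hd.ne_zero, prod_ne_zero_iff])
  rw [framePot, hsum, hW, inv_mul_eq_div, div_eq_div_iff hS0 (by positivity)]
  linear_combination -hS

/-- **Stabilizer states are 2-designs.** For prime `d` and all `n ≥ 1`, the frame
potential of stabilizer states meets the order-2 Welch bound: `F_2(d,n) = W_2(d^n)`. -/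
theorem stab_two_design (d n : ℕ) (hd : d.Prime) (hn : 1 ≤ n) :
    framePot d 2 n = welch 2 (d ^ n) :=
  stab_two_design_general d n hd
end
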